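/- arXiv:math/0502278 — 3 statements merged into one kernel-verified Lean document; each statement's English description precedes it below -/
import Mathlib

section
/- If L is a trim lattice with left modular maximal chain of length n, then for each i with 1 ≤ i ≤ n there is exactly one join-irreducible v with δ(v) = i and exactly one meet-irreducible w with ε(w) = i, where δ(v) = min{j : v ≤ x_j} and ε(w) = max{j : x_j ≤ w} + 1. -/
variable {α : Type*}

/-- An element is join-irreducible if it is not the minimum and is not a join
of two strictly smaller elements. -/
def JoinIrred [Lattice α] (a : α) : Prop :=
  ¬ IsBot a ∧ ∀ b c : α, b < a → c < a → b ⊔ c ≠ a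

/-- An element is meet-irreducible if it is not the maximum and is not a meet
of two strictly larger elements. -/
def MeetIrred [Lattice α] (a : α) : Prop :=
  ¬ IsTop a ∧ ∀ b c : α, a < b → a < c → b ⊓ c ≠ a

/-- An element `x` is left modular if `(y ⊔ x) ⊓ z = y ⊔ (x ⊓ z)` for all `y < z`. -/
def LeftModular [Lattice α] (x : α) : Prop :=
  ∀ y z : α, y < z → (y ⊔ x) ⊓ z = y ⊔ (x ⊓ z)

/-- A maximal chain `⊥ = x 0 ⋖ x 1 ⋖ ⋯ ⋖ x n = ⊤` all of whose elements are left modular. -/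
def IsLMChain [Lattice α] {n : ℕ} (x : Fin (n + 1) → α) : Prop :=
  IsBot (x 0) ∧ IsTop (x (Fin.last n)) ∧ (∀ i : Fin n, x i.castSucc ⋖ x i.succ) ∧
    ∀ i, LeftModular (x i)

/-- A finite lattice is trim if it has a left modular maximal chain of `n + 1` elements,
exactly `n` join-irreducibles and exactly `n` meet-irreducibles. -/
def Trim (α : Type*) [Lattice α] [Finite α] : Prop :=
  ∃ (n : ℕ) (x : Fin (n + 1) → α), IsLMChain x ∧
    Nat.card {v : α // JoinIrred v} = n ∧ Nat.card {v : α // MeetIrred v} = n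

/-!
A minimal element among those below `x i` but not below `x (i - 1)` is join-irreducible, and its
label `δ` is `i`; so `δ` maps the join-irreducibles onto the `n` nonzero indices of the chain, and
when there are only `n` join-irreducibles this map is a bijection. Meet-irreducibles are the
join-irreducibles of the dual lattice, read along the reversed chain.
-/

theorem Nat.card_subtype_ne_add_one {β : Type*} [Finite β] (b : β) :
    Nat.card {a // a ≠ b} + 1 = Nat.card β := by
  classical
  have := Fintype.ofFinite β
  simpa [Nat.card_eq_fintype_card, Fintype.card_subtype_compl] using
    Nat.sub_add_cancel (Fintype.card_pos_iff.2 ⟨b⟩)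

section Chain

variable [Lattice α] {ι : Type*} [LinearOrder ι] {x : ι → α}

theorem exists_joinIrred_le_not_le [WellFoundedLT α] {a b : α} (h : ¬b ≤ a) :
    ∃ v, JoinIrred v ∧ v ≤ b ∧ ¬v ≤ a := by
  obtain ⟨v, hvb, hv⟩ := exists_minimal_le_of_wellFoundedLT (¬· ≤ a) b h
  have below {c} (hc : c < v) : c ≤ a := not_not.1 (hv.not_prop_of_lt hc)
  refine ⟨v, ⟨fun hbot => hv.prop (hbot a), fun c d hc hd hcd => hv.prop ?_⟩, hvb, hv.prop⟩
  exact hcd ▸ sup_le (below hc) (below hd)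

theorem exists_joinIrred_isLeast [WellFoundedLT α] [WellFoundedGT ι] (hx : StrictMono x)
    {i : ι} (hi : ¬IsMin i) : ∃ v, JoinIrred v ∧ IsLeast {k | v ≤ x k} i := by
  obtain ⟨p, hpi⟩ := exists_covBy_of_wellFoundedGT hi
  obtain ⟨v, hv, hvi, hvp⟩ := exists_joinIrred_le_not_le (hx hpi.lt).not_ge
  exact ⟨v, hv, hvi, fun k hvk =>
    not_lt.1 fun hki => hvp (hvk.trans (hx.monotone (hpi.le_of_lt hki)))⟩

theorem existsUnique_joinIrred_isLeast [Finite α] [Finite ι] [BoundedOrder ι]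
    (hx : StrictMono x) (hbot : IsBot (x ⊥)) (htop : IsTop (x ⊤))
    (hcard : Nat.card {v : α // JoinIrred v} < Nat.card ι) {i : ι} (hi : i ≠ ⊥) :
    ∃! v, JoinIrred v ∧ IsLeast {k | v ≤ x k} i := by
  have hlabel (v : α) : ∃ k, IsLeast {k | v ≤ x k} k :=
    (exists_minimal_of_wellFoundedLT _ ⟨⊤, htop v⟩).imp fun _ => minimal_iff_isLeast.1
  choose δ hδ using hlabel
  have hδ_ne_bot {v : α} (hv : JoinIrred v) : δ v ≠ ⊥ := fun h =>
    hv.1 fun a => (h ▸ (hδ v).1 : v ≤ x ⊥).trans (hbot a)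
  let f : {v : α // JoinIrred v} → {i : ι // i ≠ ⊥} := fun v => ⟨δ v, hδ_ne_bot v.2⟩
  have hf {v : α} (hv : JoinIrred v) : f ⟨v, hv⟩ = ⟨i, hi⟩ ↔ IsLeast {k | v ≤ x k} i :=
    Subtype.ext_iff.trans ⟨fun h : δ v = i => h ▸ hδ v, (hδ v).unique⟩
  have hf_surj : f.Surjective := fun ⟨i, hi⟩ => by
    obtain ⟨v, hv, hvi⟩ := exists_joinIrred_isLeast hx (not_isMin_iff_ne_bot.2 hi)
    exact ⟨⟨v, hv⟩, Subtype.ext ((hδ v).unique hvi)⟩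
  have hf_bij : f.Bijective := hf_surj.bijective_of_nat_card_le <| by
    have := Nat.card_subtype_ne_add_one (⊥ : ι)
    omega
  obtain ⟨⟨v, hv⟩, hvi, hv_unique⟩ := hf_bij.existsUnique ⟨i, hi⟩
  exact ⟨v, ⟨hv, (hf hv).1 hvi⟩, fun w ⟨hw, hwi⟩ =>
    congrArg Subtype.val (hv_unique ⟨w, hw⟩ ((hf hw).2 hwi))⟩

end Chain

/-- In a trim lattice with left modular maximal chain `x` of length `n`, for each
`1 ≤ i ≤ n` there is exactly one join-irreducible `v` with `δ v = i` and exactly one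
meet-irreducible `w` with `ε w = i`, where `δ v = min {j | v ≤ x j}` and
`ε w = max {j | x j ≤ w} + 1`. -/
theorem unique_irreducible_per_label [Lattice α] [Finite α] {n : ℕ}
    (x : Fin (n + 1) → α) (hx : IsLMChain x)
    (hJ : Nat.card {v : α // JoinIrred v} = n)
    (hM : Nat.card {v : α // MeetIrred v} = n)
    (i : Fin (n + 1)) (hi : 1 ≤ (i : ℕ)) :
    (∃! v : α, JoinIrred v ∧ IsLeast {k : Fin (n + 1) | v ≤ x k} i) ∧
    (∃! w : α, MeetIrred w ∧ ∃ j : Fin (n + 1),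
      IsGreatest {k : Fin (n + 1) | x k ≤ w} j ∧ (j : ℕ) + 1 = (i : ℕ)) := by
  obtain ⟨hbot, htop, hcov, -⟩ := hx
  have hmono : StrictMono x := Fin.strictMono_iff_lt_succ.2 fun k => (hcov k).lt
  have hi_ne_bot : i ≠ ⊥ := fun h => by simp [h, bot_eq_zero] at hi
  refine ⟨existsUnique_joinIrred_isLeast hmono hbot htop (by simp [hJ]) hi_ne_bot, ?_⟩
  let j : Fin (n + 1) := ⟨i - 1, by omega⟩
  have hj_ne_top : j ≠ ⊤ := fun h => by simp [Fin.ext_iff, j] at h; omega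
  have hj (k : Fin (n + 1)) : (k : ℕ) + 1 = i ↔ k = j := by simp [Fin.ext_iff, j]; omega
  simp only [hj, exists_eq_right]
  -- In `αᵒᵈ` the meet-irreducibles of `α` are the join-irreducibles and `IsGreatest` is `IsLeast`.
  have hM_dual : Nat.card {w : αᵒᵈ // JoinIrred w} = n := hM
  exact existsUnique_joinIrred_isLeast (ι := (Fin (n + 1))ᵒᵈ)
    (x := OrderDual.toDual ∘ x ∘ OrderDual.ofDual) hmono.dual htop hbot (by simp [hM_dual])
    hj_ne_top
end

section
/- In a trim lattice, every element lying on some chain of maximum length (i.e., every element of the spine) is left modular. -/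
variable {α : Type*}

/-- The spine of a finite lattice: elements lying on some chain of maximum length. -/
def Spine [Lattice α] [Finite α] (a : α) : Prop :=
  ∃ C : Set α, a ∈ C ∧ IsChain (· ≤ ·) C ∧
    ∀ D : Set α, IsChain (· ≤ ·) D → D.ncard ≤ C.ncard

/-!
Let `⊥ = x₀ ⋖ ⋯ ⋖ xₙ = ⊤` be the left modular chain. Every join-irreducible `j` enters it at a
unique step (`j ≰ xᵢ`, `j ≤ xᵢ₊₁`) and every meet-irreducible `m` leaves it at a unique step
(`xᵢ ≤ m`, `xᵢ₊₁ ≰ m`). Every step is entered and left by some irreducible, and there are only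
`n` of each kind, so step `i` carries exactly one join-irreducible `jᵢ` and one meet-irreducible
`mᵢ`, and `jᵢ ≰ mᵢ` because `xᵢ ⊔ jᵢ = xᵢ₊₁`.

A chain of maximum length through `a` has `n + 1` elements. Its steps below `a` give distinct
join-irreducibles below `a`, those above `a` distinct meet-irreducibles above `a`, `n` in all;
hence `jᵢ ≤ a` or `a ≤ mᵢ` at every step `i`.

If `a` were not left modular, there would be `y < z` with `a ⊓ y = a ⊓ z` and `a ⊔ y = a ⊔ z`.
At the first step `i` with `xᵢ₊₁ ⊓ z ≰ y`, left modularity of `xᵢ` gives `jᵢ ≤ z`, `jᵢ ≰ y`,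
`y ≤ mᵢ` and `z ≰ mᵢ`, which rules out both `jᵢ ≤ a` and `a ≤ mᵢ`.
-/

def CrossesAt {n : ℕ} (P : Fin (n + 1) → Prop) (i : Fin n) : Prop :=
  ¬ P i.castSucc ∧ P i.succ

section Crossing

variable {n : ℕ} {P : Fin (n + 1) → Prop}

theorem exists_crossesAt (h0 : ¬ P 0) (hlast : P (Fin.last n)) : ∃ i, CrossesAt P i := by
  by_contra! h
  exact h0 (Fin.reverseInduction hlast (fun i hi => not_not.1 fun hi' => h i ⟨hi', hi⟩) 0)

theorem CrossesAt.eq (hP : Monotone P) {i i' : Fin n} (hi : CrossesAt P i)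
    (hi' : CrossesAt P i') : i = i' := by
  rcases lt_trichotomy i i' with h | h | h
  · exact absurd (hP (Fin.succ_le_castSucc_iff.2 h) hi.2) hi'.1
  · exact h
  · exact absurd (hP (Fin.succ_le_castSucc_iff.2 h) hi'.2) hi.1

end Crossing

theorem exists_injective_crossesAt_iff {n : ℕ} {ι : Type*} [Finite ι]
    {P : ι → Fin (n + 1) → Prop}
    (hP : ∀ b, Monotone (P b)) (h0 : ∀ b, ¬ P b 0) (hlast : ∀ b, P b (Fin.last n))
    (hsurj : ∀ i, ∃ b, CrossesAt (P b) i) (hcard : Nat.card ι ≤ n) :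
    ∃ f : ι → Fin n, Function.Injective f ∧ ∀ b i, CrossesAt (P b) i ↔ f b = i := by
  choose f hf using fun b => exists_crossesAt (h0 b) (hlast b)
  have hf_iff : ∀ b i, CrossesAt (P b) i ↔ f b = i := fun b i =>
    ⟨fun h => (hf b).eq (hP b) h, fun h => h ▸ hf b⟩
  have hf_surj : Function.Surjective f := fun i =>
    (hsurj i).imp fun b hb => (hf_iff b i).1 hb
  exact ⟨f, (hf_surj.bijective_of_nat_card_le (by rwa [Nat.card_fin])).injective, hf_iff⟩

theorem CovBy.sup_eq_of_le_of_not_le [Lattice α] {y z j : α} (h : y ⋖ z) (hjz : j ≤ z)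
    (hjy : ¬ j ≤ y) : y ⊔ j = z :=
  (sup_le h.le hjz).eq_of_not_lt (h.2 (left_lt_sup.2 hjy))

theorem leftModular_of_forall_inf_eq_sup_eq [Lattice α] {a : α}
    (h : ∀ ⦃y z : α⦄, y < z → a ⊓ y = a ⊓ z → a ⊔ y = a ⊔ z → False) : LeftModular a := by
  intro y z hyz
  have hle : y ⊔ (a ⊓ z) ≤ (y ⊔ a) ⊓ z :=
    le_inf (sup_le_sup_left inf_le_left y) (sup_le hyz.le inf_le_right)
  refine (hle.eq_of_not_lt fun hlt => h hlt ?_ ?_).symm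
  · refine le_antisymm (inf_le_inf_left a hle) (le_inf inf_le_left ?_)
    exact (inf_le_inf_left a inf_le_right).trans le_sup_right
  · refine le_antisymm (sup_le_sup_left hle a) (sup_le le_sup_left ?_)
    exact inf_le_left.trans (sup_le (le_sup_left.trans le_sup_right) le_sup_left)

theorem exists_joinIrred_le_not_le_s10 [Lattice α] [WellFoundedLT α] {y z : α} (h : ¬ z ≤ y) :
    ∃ j, JoinIrred j ∧ j ≤ z ∧ ¬ j ≤ y := by
  induction z using WellFoundedLT.induction with
  | _ z ih =>
  by_cases hz : JoinIrred z
  · exact ⟨z, hz, le_rfl, h⟩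
  have hbot : ¬ IsBot z := fun hbot => h (hbot y)
  obtain ⟨b, c, hb, hc, rfl⟩ : ∃ b c, b < z ∧ c < z ∧ b ⊔ c = z := by
    simpa [JoinIrred, hbot] using hz
  obtain hby | hcy : ¬ b ≤ y ∨ ¬ c ≤ y := by
    rw [← not_and_or]
    exact fun hbc => h (sup_le hbc.1 hbc.2)
  · obtain ⟨j, hj, hjb, hjy⟩ := ih b hb hby
    exact ⟨j, hj, hjb.trans le_sup_left, hjy⟩
  · obtain ⟨j, hj, hjc, hjy⟩ := ih c hc hcy
    exact ⟨j, hj, hjc.trans le_sup_right, hjy⟩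

theorem exists_meetIrred_le_not_le [Lattice α] [WellFoundedGT α] {y z : α} (h : ¬ z ≤ y) :
    ∃ m, MeetIrred m ∧ y ≤ m ∧ ¬ z ≤ m :=
  exists_joinIrred_le_not_le_s10 (α := αᵒᵈ) h

section ChainLength

variable [Lattice α] [Finite α]

theorem ncard_le_ncard_joinIrred_le_add_one {a : α} {D : Set α} (hD : IsChain (· ≤ ·) D)
    (hDa : ∀ d ∈ D, d ≤ a) : D.ncard ≤ {j | JoinIrred j ∧ j ≤ a}.ncard + 1 := by
  induction a using WellFoundedLT.induction generalizing D with
  | _ a ih =>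
  set D' := {d ∈ D | d < a}
  have hD_le : D.ncard ≤ D'.ncard + 1 :=
    (Set.ncard_le_ncard fun d hd => (hDa d hd).eq_or_lt.imp id fun h => ⟨hd, h⟩).trans
      (Set.ncard_insert_le a D')
  obtain hempty | hne := D'.eq_empty_or_nonempty
  · rw [hempty, Set.ncard_empty] at hD_le
    omega
  obtain ⟨d, hd⟩ := D'.toFinite.exists_maximal hne
  have hD'd : ∀ d' ∈ D', d' ≤ d := fun d' hd' =>
    (hD.total hd'.1 hd.prop.1).elim id (hd.le_of_ge hd')
  obtain ⟨j, hj, hja, hjd⟩ := exists_joinIrred_le_not_le_s10 hd.prop.2.not_ge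
  have hlt : {j | JoinIrred j ∧ j ≤ d}.ncard < {j | JoinIrred j ∧ j ≤ a}.ncard :=
    Set.ncard_lt_ncard ⟨fun k hk => ⟨hk.1, hk.2.trans hd.prop.2.le⟩,
      fun hsub => hjd (hsub ⟨hj, hja⟩).2⟩
  have := ih d hd.prop.2 (D := D') (hD.mono (Set.sep_subset _ _)) hD'd
  omega

theorem ncard_le_ncard_meetIrred_ge_add_one {a : α} {D : Set α} (hD : IsChain (· ≤ ·) D)
    (hDa : ∀ d ∈ D, a ≤ d) : D.ncard ≤ {m | MeetIrred m ∧ a ≤ m}.ncard + 1 :=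
  ncard_le_ncard_joinIrred_le_add_one (α := αᵒᵈ) hD.symm hDa

theorem Spine.le_ncard_add_ncard {a : α} (ha : Spine a) {n : ℕ} {x : Fin (n + 1) → α}
    (hx : StrictMono x) :
    n ≤ {j | JoinIrred j ∧ j ≤ a}.ncard + {m | MeetIrred m ∧ a ≤ m}.ncard := by
  obtain ⟨C, haC, hC, hCmax⟩ := ha
  have hC_card : n + 1 ≤ C.ncard := by
    simpa [Set.ncard_range_of_injective hx.injective] using
      hCmax (Set.range x) hx.monotone.isChain_range
  have hunion : {c ∈ C | c ≤ a} ∪ {c ∈ C | a ≤ c} = C := by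
    ext c
    refine ⟨by rintro (⟨hc, -⟩ | ⟨hc, -⟩) <;> exact hc, fun hc => ?_⟩
    exact (hC.total hc haC).imp (⟨hc, ·⟩) (⟨hc, ·⟩)
  have hinter : {c ∈ C | c ≤ a} ∩ {c ∈ C | a ≤ c} = {a} := by
    ext c
    exact ⟨fun h => le_antisymm h.1.2 h.2.2, by rintro rfl; exact ⟨⟨haC, le_rfl⟩, haC, le_rfl⟩⟩
  have hsplit := Set.ncard_union_add_ncard_inter {c ∈ C | c ≤ a} {c ∈ C | a ≤ c}
  rw [hunion, hinter, Set.ncard_singleton] at hsplit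
  have hbelow := ncard_le_ncard_joinIrred_le_add_one (a := a)
    (hC.mono (Set.sep_subset C _)) fun c hc => hc.2
  have habove := ncard_le_ncard_meetIrred_ge_add_one (a := a)
    (hC.mono (Set.sep_subset C _)) fun c hc => hc.2
  omega

end ChainLength

section MaximalChain

variable [Lattice α] {n : ℕ} {x : Fin (n + 1) → α}

theorem exists_injective_joinIrred_crossesAt_iff [Finite α] (h0 : IsBot (x 0))
    (hlast : IsTop (x (Fin.last n))) (hx : StrictMono x)
    (hJ : Nat.card {j : α // JoinIrred j} ≤ n) :
    ∃ f : {j : α // JoinIrred j} → Fin n,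
      Function.Injective f ∧ ∀ j i, CrossesAt (j.1 ≤ x ·) i ↔ f j = i := by
  refine exists_injective_crossesAt_iff (fun j k k' hk h => h.trans (hx.monotone hk))
    (fun j h => j.2.1 fun b => h.trans (h0 b)) (fun j => hlast j) (fun i => ?_) hJ
  obtain ⟨j, hj, hjs, hjc⟩ := exists_joinIrred_le_not_le_s10 (hx i.castSucc_lt_succ).not_ge
  exact ⟨⟨j, hj⟩, hjc, hjs⟩

theorem exists_injective_meetIrred_crossesAt_iff [Finite α] (h0 : IsBot (x 0))
    (hlast : IsTop (x (Fin.last n))) (hx : StrictMono x)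
    (hM : Nat.card {m : α // MeetIrred m} ≤ n) :
    ∃ g : {m : α // MeetIrred m} → Fin n,
      Function.Injective g ∧ ∀ m i, CrossesAt (¬ x · ≤ m.1) i ↔ g m = i := by
  refine exists_injective_crossesAt_iff (fun m k k' hk h h' => h ((hx.monotone hk).trans h'))
    (fun m h => h (h0 m)) (fun m h => m.2.1 fun b => (hlast b).trans h) (fun i => ?_) hM
  obtain ⟨m, hm, hcm, hsm⟩ := exists_meetIrred_le_not_le (hx i.castSucc_lt_succ).not_ge
  exact ⟨⟨m, hm⟩, not_not.2 hcm, hsm⟩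

/-- The steps of a maximum chain through `a` supply at least `n` irreducibles `j ≤ a` or
`m ≥ a`, at pairwise different steps of `x`; so every step of `x` carries one of them. -/
theorem Spine.le_or_le_of_crossesAt [Finite α] {a : α} (ha : Spine a) (h0 : IsBot (x 0))
    (hlast : IsTop (x (Fin.last n))) (hcov : ∀ i : Fin n, x i.castSucc ⋖ x i.succ)
    (hJ : Nat.card {j : α // JoinIrred j} ≤ n) (hM : Nat.card {m : α // MeetIrred m} ≤ n)
    {i : Fin n} {j m : α} (hj : JoinIrred j) (hm : MeetIrred m) (hji : CrossesAt (j ≤ x ·) i)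
    (hmi : CrossesAt (¬ x · ≤ m) i) : j ≤ a ∨ a ≤ m := by
  have hx : StrictMono x := Fin.strictMono_iff_lt_succ.2 fun i => (hcov i).lt
  obtain ⟨f, hf, hf_iff⟩ := exists_injective_joinIrred_crossesAt_iff h0 hlast hx hJ
  obtain ⟨g, hg, hg_iff⟩ := exists_injective_meetIrred_crossesAt_iff h0 hlast hx hM
  have hfg : ∀ j m, f j = g m → ¬ j.1 ≤ m.1 := by
    intro j m hjm hle
    obtain ⟨hjc, hjs⟩ := (hf_iff j (g m)).2 hjm
    obtain ⟨hmc, hms⟩ := (hg_iff m (g m)).2 rfl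
    exact hms ((hcov _).sup_eq_of_le_of_not_le hjs hjc ▸ sup_le (not_not.1 hmc) hle)
  let Φ : {j | JoinIrred j ∧ j ≤ a} ⊕ {m | MeetIrred m ∧ a ≤ m} → Fin n :=
    Sum.elim (fun j => f ⟨j, j.2.1⟩) (fun m => g ⟨m, m.2.1⟩)
  have hΦ : Function.Injective Φ := by
    rintro (j | m) (j' | m') h
    · exact congrArg Sum.inl (Subtype.ext (Subtype.mk.inj (hf h)))
    · exact absurd (j.2.2.trans m'.2.2) (hfg _ _ h)
    · exact absurd (j'.2.2.trans m.2.2) (hfg _ _ h.symm)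
    · exact congrArg Sum.inr (Subtype.ext (Subtype.mk.inj (hg h)))
  have hcard :
      Nat.card (Fin n) ≤ Nat.card ({j | JoinIrred j ∧ j ≤ a} ⊕ {m | MeetIrred m ∧ a ≤ m}) := by
    simpa [Nat.card_sum, Nat.card_coe_set_eq] using ha.le_ncard_add_ncard hx
  obtain ⟨j' | m', hs⟩ := (hΦ.bijective_of_nat_card_le hcard).surjective i
  · left
    have : j' = j := congrArg Subtype.val (hf (hs.trans ((hf_iff ⟨j, hj⟩ i).1 hji).symm))
    exact this ▸ j'.2.2
  · right
    have : m' = m := congrArg Subtype.val (hg (hs.trans ((hg_iff ⟨m, hm⟩ i).1 hmi).symm))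
    exact this ▸ m'.2.2

theorem exists_crossesAt_joinIrred_meetIrred_of_lt [WellFoundedLT α] [WellFoundedGT α]
    (h0 : IsBot (x 0)) (hlast : IsTop (x (Fin.last n))) (hLM : ∀ i, LeftModular (x i))
    {y z : α} (hyz : y < z) :
    ∃ i j m, JoinIrred j ∧ MeetIrred m ∧ CrossesAt (j ≤ x ·) i ∧ CrossesAt (¬ x · ≤ m) i ∧
      j ≤ z ∧ ¬ j ≤ y ∧ y ≤ m ∧ ¬ z ≤ m := by
  obtain ⟨i, hic, his⟩ := exists_crossesAt (P := fun k => ¬ x k ⊓ z ≤ y)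
    (not_not.2 (inf_le_left.trans (h0 y))) (by rw [inf_eq_right.2 (hlast z)]; exact hyz.not_ge)
  -- `i` is the first step with `x (i + 1) ⊓ z ≰ y`; left modularity of `x i` does the rest
  have hmod : (y ⊔ x i.castSucc) ⊓ z = y := by
    rw [hLM _ y z hyz, sup_eq_left.2 (not_not.1 hic)]
  obtain ⟨j, hj, hjw, hjy⟩ := exists_joinIrred_le_not_le_s10 his
  obtain ⟨m, hm, hym, hwm⟩ := exists_meetIrred_le_not_le (y := y ⊔ x i.castSucc)
    (z := x i.succ ⊓ z) fun h => his (hmod ▸ le_inf h inf_le_right)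
  refine ⟨i, j, m, hj, hm, ⟨fun h => hjy ?_, hjw.trans inf_le_left⟩,
    ⟨not_not.2 (le_sup_right.trans hym), fun h => hwm (inf_le_left.trans h)⟩,
    hjw.trans inf_le_right, hjy, le_sup_left.trans hym, fun h => hwm (inf_le_right.trans h)⟩
  exact (le_inf h (hjw.trans inf_le_right)).trans (not_not.1 hic)

end MaximalChain

/-- Every element of the spine of a trim lattice is left modular. -/
theorem spine_left_modular [Lattice α] [Finite α] (h : Trim α) (a : α) (ha : Spine a) :
    LeftModular a := by
  obtain ⟨n, x, ⟨h0, hlast, hcov, hLM⟩, hJ, hM⟩ := h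
  refine leftModular_of_forall_inf_eq_sup_eq fun y z hyz hinf hsup => ?_
  obtain ⟨i, j, m, hj, hm, hji, hmi, hjz, hjy, hym, hzm⟩ :=
    exists_crossesAt_joinIrred_meetIrred_of_lt h0 hlast hLM hyz
  rcases ha.le_or_le_of_crossesAt h0 hlast hcov hJ.le hM.le hj hm hji hmi with hja | ham
  · exact hjy <| calc
      j ≤ a ⊓ z := le_inf hja hjz
      _ = a ⊓ y := hinf.symm
      _ ≤ y := inf_le_right
  · exact hzm <| calc
      z ≤ a ⊔ z := le_sup_right
      _ = a ⊔ y := hsup.symm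
      _ ≤ m := sup_le ham hym
end

section
/- The spine of a trim lattice, with the induced lattice structure, is a distributive lattice. -/
variable {α : Type*}

/-!
Let `⊥ = x 0 ⋖ ⋯ ⋖ x n = ⊤` be a maximal chain. Label a join-irreducible `j` by the first `i`
with `j ≤ x i`, and a meet-irreducible `m` by the first `i` with `x i ≰ m`. Every step of the
chain carries a label of each kind, so when there are only `n` irreducibles of each kind both
labellings are bijections onto the `n` steps; and a join-irreducible and a meet-irreducible with
the same label are incomparable. Along any chain the number of join-irreducibles below an element
strictly increases, and dually, so a chain of length `n` through `v` forces the labels of the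
join-irreducibles below `v` and of the meet-irreducibles above `v` to fill all `n` steps. Hence,
for `v` in the spine, every join-irreducible `j ≰ v` shares its label with a unique
meet-irreducible `m ≥ v`. If `j ≰ b` and `j ≰ c` for `b`, `c` in the spine, both give the same
`m ≥ b ⊔ c`, so `j ≰ b ⊔ c`; this primality of join-irreducibles gives distributivity.
-/

open Set OrderDual

theorem Set.SurjOn.injOn_of_ncard_le {β : Type*} {f : α → β} {s : Set α} {t : Set β}
    (h : SurjOn f s t) (hst : s.ncard ≤ t.ncard) (hs : s.Finite) : InjOn f s :=
  injOn_of_ncard_image_eq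
    (le_antisymm (ncard_image_le hs) (hst.trans (ncard_le_ncard h (hs.image f)))) hs

theorem Fin.ncard_compl_singleton_zero (n : ℕ) : ({0}ᶜ : Set (Fin (n + 1))).ncard = n := by
  rw [ncard_compl, ncard_singleton, Nat.card_fin, Nat.add_sub_cancel]

theorem Fin.injOn_of_ncard_le_of_succ_mem_image {n : ℕ} {f : α → Fin (n + 1)} {s : Set α}
    (hs : s.Finite) (hcard : s.ncard ≤ n) (hsucc : ∀ i : Fin n, i.succ ∈ f '' s) : InjOn f s :=
  SurjOn.injOn_of_ncard_le
    (fun _ hk => by obtain ⟨i, rfl⟩ := Fin.exists_succ_eq.2 hk; exact hsucc i)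
    (hcard.trans_eq (ncard_compl_singleton_zero n).symm) hs

section Chain
variable [PartialOrder α] {C : Set α} {f : α → ℕ} {a : α}

theorem IsChain.ncard_le_of_strictMono (hC : IsChain (· ≤ ·) C) (hf : StrictMono f)
    (ha : ∀ c ∈ C, c ≤ a) : C.ncard ≤ f a + 1 := by
  have hinj : InjOn f C := by
    intro c hc d hd hcd
    by_contra hne
    rcases hC hc hd hne with h | h
    · exact (hf (h.lt_of_ne hne)).ne hcd
    · exact (hf (h.lt_of_ne (Ne.symm hne))).ne' hcd
  calc C.ncard ≤ (Iic (f a)).ncard :=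
        ncard_le_ncard_of_injOn f (fun c hc => hf.monotone (ha c hc)) hinj
    _ = f a + 1 := ncard_Iic_nat _

theorem IsChain.ncard_le_of_strictAnti (hC : IsChain (· ≤ ·) C) (hf : StrictAnti f)
    (ha : ∀ c ∈ C, a ≤ c) : C.ncard ≤ f a + 1 :=
  IsChain.ncard_le_of_strictMono (α := αᵒᵈ) hC.symm hf.dual_left ha

end Chain

section Irreducible
variable [Lattice α] [Finite α]

theorem le_of_forall_joinIrred_le {a b : α} (h : ∀ j, JoinIrred j → j ≤ a → j ≤ b) :
    a ≤ b := by
  induction a using WellFoundedLT.induction with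
  | ind a ih =>
    by_cases ha : JoinIrred a
    · exact h a ha le_rfl
    by_cases hbot : IsBot a
    · exact hbot b
    obtain ⟨u, v, hu, hv, rfl⟩ : ∃ u v, u < a ∧ v < a ∧ u ⊔ v = a := by
      simpa [JoinIrred, hbot] using ha
    exact sup_le (ih u hu fun j hj hju => h j hj (hju.trans le_sup_left))
      (ih v hv fun j hj hjv => h j hj (hjv.trans le_sup_right))

theorem exists_joinIrred_of_not_le {a b : α} (h : ¬ a ≤ b) :
    ∃ j, JoinIrred j ∧ j ≤ a ∧ ¬ j ≤ b := by
  by_contra! hc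
  exact h (le_of_forall_joinIrred_le hc)

theorem exists_meetIrred_of_not_le {a b : α} (h : ¬ a ≤ b) :
    ∃ m, MeetIrred m ∧ b ≤ m ∧ ¬ a ≤ m :=
  exists_joinIrred_of_not_le (α := αᵒᵈ) (a := toDual b) (b := toDual a) h

theorem strictMono_ncard_joinIrred_inter_Iic :
    StrictMono fun a : α => ({j | JoinIrred j} ∩ Iic a).ncard := by
  intro a b hab
  obtain ⟨j, hj, hjb, hja⟩ := exists_joinIrred_of_not_le hab.not_ge
  refine ncard_lt_ncard ((ssubset_iff_of_subset ?_).2 ⟨j, ⟨hj, hjb⟩, fun h => hja h.2⟩)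
  exact inter_subset_inter_right _ (Iic_subset_Iic.2 hab.le)

theorem strictAnti_ncard_meetIrred_inter_Ici :
    StrictAnti fun a : α => ({m | MeetIrred m} ∩ Ici a).ncard :=
  fun _ _ hab => strictMono_ncard_joinIrred_inter_Iic (α := αᵒᵈ) hab

theorem IsChain.ncard_le_of_mem {C : Set α} (hC : IsChain (· ≤ ·) C) {v : α} (hv : v ∈ C) :
    C.ncard ≤ ({j | JoinIrred j} ∩ Iic v).ncard + ({m | MeetIrred m} ∩ Ici v).ncard + 1 := by
  have hsplit : C ⊆ (C ∩ Iic v) ∪ (C ∩ Ici v) := fun c hc =>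
    (hC.total hc hv).imp (⟨hc, ·⟩) (⟨hc, ·⟩)
  have hbelow := (hC.mono (inter_subset_left (t := Iic v))).ncard_le_of_strictMono
    strictMono_ncard_joinIrred_inter_Iic fun c hc => hc.2
  have habove := (hC.mono (inter_subset_left (t := Ici v))).ncard_le_of_strictAnti
    strictAnti_ncard_meetIrred_inter_Ici fun c hc => hc.2
  have hmeet : 0 < ((C ∩ Iic v) ∩ (C ∩ Ici v)).ncard :=
    (ncard_pos).2 ⟨v, ⟨hv, le_rfl⟩, hv, le_rfl⟩
  have := ncard_union_add_ncard_inter (C ∩ Iic v) (C ∩ Ici v)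
  have := ncard_le_ncard hsplit
  omega

end Irreducible

structure IsMaximalChain [Preorder α] {n : ℕ} (x : Fin (n + 1) → α) : Prop where
  isBot_zero : IsBot (x 0)
  isTop_last : IsTop (x (Fin.last n))
  covBy (i : Fin n) : x i.castSucc ⋖ x i.succ

section MaximalChain
variable [Lattice α] {n : ℕ} {x : Fin (n + 1) → α}

theorem IsLMChain.isMaximalChain (h : IsLMChain x) : IsMaximalChain x :=
  ⟨h.1, h.2.1, h.2.2.1⟩

theorem IsMaximalChain.strictMono (hx : IsMaximalChain x) : StrictMono x :=
  Fin.strictMono_iff_lt_succ.2 fun i => (hx.covBy i).lt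

theorem IsMaximalChain.le_ncard_add_ncard_of_spine [Finite α] (hx : IsMaximalChain x) {v : α}
    (hv : Spine v) :
    n ≤ ({j | JoinIrred j} ∩ Iic v).ncard + ({m | MeetIrred m} ∩ Ici v).ncard := by
  obtain ⟨C, hvC, hC, hmax⟩ := hv
  have hlong := hmax _ hx.strictMono.monotone.isChain_range
  rw [ncard_range_of_injective hx.strictMono.injective, Nat.card_fin] at hlong
  have := hC.ncard_le_of_mem hvC
  omega

open Classical in
/-- The first `i` with `j ≤ x i`; the alternative `i = Fin.last n` only makes the search total. -/
noncomputable def joinLabel (x : Fin (n + 1) → α) (j : α) : Fin (n + 1) :=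
  Fin.find (fun i => j ≤ x i ∨ i = Fin.last n) ⟨_, Or.inr rfl⟩

open Classical in
/-- The first `i` with `x i ≰ m`; junk (`Fin.last n`) when `m` is the top element. -/
noncomputable def meetLabel (x : Fin (n + 1) → α) (m : α) : Fin (n + 1) :=
  Fin.find (fun i => ¬ x i ≤ m ∨ i = Fin.last n) ⟨_, Or.inr rfl⟩

theorem IsMaximalChain.joinLabel_le_iff (hx : IsMaximalChain x) {j : α} {i : Fin (n + 1)} :
    joinLabel x j ≤ i ↔ j ≤ x i := by
  simp only [joinLabel, Fin.find_le_iff]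
  constructor
  · rintro ⟨k, hki, hk | rfl⟩
    · exact hk.trans (hx.strictMono.monotone hki)
    · exact (hx.isTop_last j).trans (hx.strictMono.monotone hki)
  · exact fun h => ⟨i, le_rfl, Or.inl h⟩

theorem IsMaximalChain.meetLabel_le_iff (hx : IsMaximalChain x) {m : α} (hm : ¬ IsTop m)
    {i : Fin (n + 1)} : meetLabel x m ≤ i ↔ ¬ x i ≤ m := by
  simp only [meetLabel, Fin.find_le_iff]
  constructor
  · rintro ⟨k, hki, hk | rfl⟩
    · exact fun h => hk ((hx.strictMono.monotone hki).trans h)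
    · exact fun h => hm fun b => (hx.isTop_last b).trans ((hx.strictMono.monotone hki).trans h)
  · exact fun h => ⟨i, le_rfl, Or.inl h⟩

theorem IsMaximalChain.joinLabel_ne_zero (hx : IsMaximalChain x) {j : α} (hj : JoinIrred j) :
    joinLabel x j ≠ 0 :=
  fun h => hj.1 (hx.isBot_zero.mono (hx.joinLabel_le_iff.1 h.le))

theorem IsMaximalChain.meetLabel_ne_zero (hx : IsMaximalChain x) {m : α} (hm : MeetIrred m) :
    meetLabel x m ≠ 0 :=
  fun h => (hx.meetLabel_le_iff hm.1).1 h.le (hx.isBot_zero m)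

theorem IsMaximalChain.exists_joinLabel_eq [Finite α] (hx : IsMaximalChain x) (i : Fin n) :
    ∃ j, JoinIrred j ∧ joinLabel x j = i.succ := by
  obtain ⟨j, hj, hj_succ, hj_cast⟩ := exists_joinIrred_of_not_le (hx.covBy i).lt.not_ge
  refine ⟨j, hj, le_antisymm (hx.joinLabel_le_iff.2 hj_succ) ?_⟩
  rwa [← Fin.castSucc_lt_iff_succ_le, ← not_le, hx.joinLabel_le_iff]

theorem IsMaximalChain.exists_meetLabel_eq [Finite α] (hx : IsMaximalChain x) (i : Fin n) :
    ∃ m, MeetIrred m ∧ meetLabel x m = i.succ := by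
  obtain ⟨m, hm, hm_cast, hm_succ⟩ := exists_meetIrred_of_not_le (hx.covBy i).lt.not_ge
  refine ⟨m, hm, le_antisymm ((hx.meetLabel_le_iff hm.1).2 hm_succ) ?_⟩
  rwa [← Fin.castSucc_lt_iff_succ_le, ← not_le, hx.meetLabel_le_iff hm.1, not_not]

theorem IsMaximalChain.not_le_of_joinLabel_eq_meetLabel (hx : IsMaximalChain x) {j m : α}
    (hj : JoinIrred j) (hm : MeetIrred m) (h : joinLabel x j = meetLabel x m) : ¬ j ≤ m := by
  obtain ⟨i, hi⟩ := Fin.exists_succ_eq.2 (hx.joinLabel_ne_zero hj)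
  have hj_succ : j ≤ x i.succ := hx.joinLabel_le_iff.1 hi.ge
  have hlt : i.castSucc < joinLabel x j := hi ▸ Fin.castSucc_lt_succ
  have hj_cast : ¬ j ≤ x i.castSucc := fun hc => (hx.joinLabel_le_iff.2 hc).not_gt hlt
  have hm_succ : ¬ x i.succ ≤ m := (hx.meetLabel_le_iff hm.1).1 (h ▸ hi.ge)
  have hm_cast : x i.castSucc ≤ m :=
    not_not.1 fun hc => ((hx.meetLabel_le_iff hm.1).2 hc).not_gt (h ▸ hlt)
  -- `j` completes the step `x i.castSucc ⋖ x i.succ`, whose bottom but not top lies below `m`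
  have hstep : x i.castSucc ⊔ j = x i.succ :=
    ((hx.covBy i).eq_or_eq le_sup_left (sup_le (hx.covBy i).le hj_succ)).resolve_left
      fun h' => hj_cast (h' ▸ le_sup_right)
  exact fun hjm => hm_succ (hstep ▸ sup_le hm_cast hjm)

theorem IsMaximalChain.injOn_joinLabel [Finite α] (hx : IsMaximalChain x)
    (hJ : {j : α | JoinIrred j}.ncard ≤ n) : InjOn (joinLabel x) {j | JoinIrred j} :=
  Fin.injOn_of_ncard_le_of_succ_mem_image (toFinite _) hJ hx.exists_joinLabel_eq

theorem IsMaximalChain.injOn_meetLabel [Finite α] (hx : IsMaximalChain x)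
    (hM : {m : α | MeetIrred m}.ncard ≤ n) : InjOn (meetLabel x) {m | MeetIrred m} :=
  Fin.injOn_of_ncard_le_of_succ_mem_image (toFinite _) hM hx.exists_meetLabel_eq

theorem IsMaximalChain.exists_meetLabel_eq_joinLabel [Finite α] (hx : IsMaximalChain x)
    (hJ : {j : α | JoinIrred j}.ncard ≤ n) (hM : {m : α | MeetIrred m}.ncard ≤ n) {v : α}
    (hv : n ≤ ({j | JoinIrred j} ∩ Iic v).ncard + ({m | MeetIrred m} ∩ Ici v).ncard)
    {j : α} (hj : JoinIrred j) (hjv : ¬ j ≤ v) :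
    ∃ m, MeetIrred m ∧ v ≤ m ∧ meetLabel x m = joinLabel x j := by
  set A := joinLabel x '' ({j | JoinIrred j} ∩ Iic v)
  set B := meetLabel x '' ({m | MeetIrred m} ∩ Ici v)
  have hA : A.ncard = ({j | JoinIrred j} ∩ Iic v).ncard :=
    ((hx.injOn_joinLabel hJ).mono inter_subset_left).ncard_image
  have hB : B.ncard = ({m | MeetIrred m} ∩ Ici v).ncard :=
    ((hx.injOn_meetLabel hM).mono inter_subset_left).ncard_image
  have hAB : Disjoint A B := by
    rw [disjoint_left]
    rintro _ ⟨j', ⟨hj', hj'v⟩, rfl⟩ ⟨m', ⟨hm', hm'v⟩, heq⟩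
    exact hx.not_le_of_joinLabel_eq_meetLabel hj' hm' heq.symm (le_trans hj'v hm'v)
  have hsub : A ∪ B ⊆ {0}ᶜ := union_subset
    (image_subset_iff.2 fun j' hj' => hx.joinLabel_ne_zero hj'.1)
    (image_subset_iff.2 fun m' hm' => hx.meetLabel_ne_zero hm'.1)
  have hcover : A ∪ B = {0}ᶜ := eq_of_subset_of_ncard_le hsub
    (by rw [ncard_union_eq hAB, hA, hB, Fin.ncard_compl_singleton_zero]; exact hv)
  have hjAB : joinLabel x j ∈ A ∪ B := hcover ▸ hx.joinLabel_ne_zero hj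
  rcases hjAB with ⟨j', ⟨hj', hj'v⟩, heq⟩ | ⟨m, ⟨hm, hvm⟩, heq⟩
  · exact absurd (hx.injOn_joinLabel hJ hj' hj heq ▸ hj'v) hjv
  · exact ⟨m, hm, hvm, heq⟩

theorem IsMaximalChain.le_or_le_of_le_sup_of_spine [Finite α] (hx : IsMaximalChain x)
    (hJ : {j : α | JoinIrred j}.ncard ≤ n) (hM : {m : α | MeetIrred m}.ncard ≤ n) {b c : α}
    (hb : Spine b) (hc : Spine c) {j : α} (hj : JoinIrred j) (hjbc : j ≤ b ⊔ c) :
    j ≤ b ∨ j ≤ c := by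
  by_contra! ⟨hjb, hjc⟩
  obtain ⟨mb, hmb, hbmb, hlb⟩ :=
    hx.exists_meetLabel_eq_joinLabel hJ hM (hx.le_ncard_add_ncard_of_spine hb) hj hjb
  obtain ⟨mc, hmc, hcmc, hlc⟩ :=
    hx.exists_meetLabel_eq_joinLabel hJ hM (hx.le_ncard_add_ncard_of_spine hc) hj hjc
  obtain rfl : mb = mc := hx.injOn_meetLabel hM hmb hmc (hlb.trans hlc.symm)
  exact hx.not_le_of_joinLabel_eq_meetLabel hj hmb hlb.symm (hjbc.trans (sup_le hbmb hcmc))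

end MaximalChain

theorem spine_distributive_general [Lattice α] [Finite α] (h : Trim α) (a b c : α)
    (hb : Spine b) (hc : Spine c) :
    a ⊓ (b ⊔ c) = (a ⊓ b) ⊔ (a ⊓ c) := by
  obtain ⟨n, x, hx, hJ, hM⟩ := h
  have hJ' : {j : α | JoinIrred j}.ncard ≤ n := (Nat.card_coe_set_eq _).symm.trans_le hJ.le
  have hM' : {m : α | MeetIrred m}.ncard ≤ n := (Nat.card_coe_set_eq _).symm.trans_le hM.le
  refine le_antisymm (le_of_forall_joinIrred_le fun j hj hjle => ?_) le_inf_sup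
  have hja : j ≤ a := hjle.trans inf_le_left
  rcases hx.isMaximalChain.le_or_le_of_le_sup_of_spine hJ' hM' hb hc hj (hjle.trans inf_le_right)
    with hjb | hjc
  · exact le_sup_of_le_left (le_inf hja hjb)
  · exact le_sup_of_le_right (le_inf hja hjc)

/-- The spine of a trim lattice, with the induced lattice structure, is distributive. -/
theorem spine_distributive [Lattice α] [Finite α] (h : Trim α) (a b c : α)
    (ha : Spine a) (hb : Spine b) (hc : Spine c) :
    a ⊓ (b ⊔ c) = (a ⊓ b) ⊔ (a ⊓ c) :=
  spine_distributive_general h a b c hb hc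
end
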